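/- Let n ≥ 1 and let f ∈ S_n be a Laurent polynomial in n variables. Then f has vanishing logarithmic Hessian if and only if there exists a matrix A ∈ M(n,ℤ) with det A = ±1 such that the pullback ξ_A^* f depends on at most n−1 variables, i.e. every exponent I ∈ ℤⁿ in the support of ξ_A^* f satisfies I_n = 0. -/

import Mathlib

noncomputable section

/-- The ring of Laurent polynomials in `n` variables over `ℂ`:
`S_n = ℂ[x_1^{±1},…,x_n^{±1}]`, realized as the group algebra of `ℤⁿ`. -/
abbrev LaurentPoly (n : ℕ) := AddMonoidAlgebra ℂ (Fin n → ℤ)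

/-- The `j`-th logarithmic derivative `θ_j f = x_j ∂f/∂x_j = Σ_I a_I I_j x^I`. -/
noncomputable def thetaDeriv {n : ℕ} (j : Fin n) (f : LaurentPoly n) : LaurentPoly n :=
  AddMonoidAlgebra.ofCoeff (Finsupp.sum f.coeff fun I a => Finsupp.single I (a * (I j : ℂ)))

/-- Evaluation of a Laurent polynomial at a point of the torus `(ℂ*)ⁿ`. -/
noncomputable def tEval {n : ℕ} (x : Fin n → ℂˣ) (f : LaurentPoly n) : ℂ :=
  Finsupp.sum f.coeff fun I a => a * ∏ i, ((x i ^ I i : ℂˣ) : ℂ)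

/-- The logarithmic Hessian matrix `Θf = ((θ_j θ_i f))_{i,j}` of `f`,
as a matrix of Laurent polynomials. -/
noncomputable def logHessian {n : ℕ} (f : LaurentPoly n) :
    Matrix (Fin n) (Fin n) (LaurentPoly n) :=
  Matrix.of fun i j => thetaDeriv j (thetaDeriv i f)

/-- The logarithmic Hessian matrix of `f` evaluated at a point `x` of the torus. -/
noncomputable def logHessianAt {n : ℕ} (f : LaurentPoly n) (x : Fin n → ℂˣ) :
    Matrix (Fin n) (Fin n) ℂ :=
  Matrix.of fun i j => tEval x (thetaDeriv j (thetaDeriv i f))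

/-- The pullback `ξ_A^* f` of a Laurent polynomial `f` by the monoidal map
`ξ_A(x) = (∏_j x_j^{a_{1j}}, …, ∏_j x_j^{a_{nj}})`; on exponents this is `I ↦ Aᵀ I`,
since `f(ξ_A x) = Σ_I a_I x^{Aᵀ I}`. -/
noncomputable def monoidalPullback {n : ℕ} (A : Matrix (Fin n) (Fin n) ℤ)
    (f : LaurentPoly n) : LaurentPoly n :=
  AddMonoidAlgebra.ofCoeff (Finsupp.mapDomain (fun I => A.transpose.mulVec I) f.coeff)

/-!
Write `Θf = ∑_{I ∈ supp f} a_I x^I · I Iᵀ`. If `supp f ⊆ v^⊥` for some `v ∈ ℤⁿ ∖ 0`, then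
`Θf v = 0`. Conversely, expanding the determinant multilinearly in the rows gives
`det Θf = ∑_g (∏_i a_{g_i} g_i(i)) det[g] x^{g_1 + ⋯ + g_n}` over `n`-tuples `g` of exponents.
If some `det[g] ≠ 0`, choose such a `g` with `∑ g_i` lexicographically maximal; by basis exchange
every tuple with nonzero determinant and the same sum is a permutation of `g`, so the coefficient
of `x^{∑ g_i}` is `∏ a_{g_i} · det[g]² ≠ 0`. If all `det[g]` vanish, the same expansion shows that
the Gram matrix `∑ I Iᵀ` has a kernel vector `v`, and `vᵀ(∑ I Iᵀ)v = ∑ ⟨I, v⟩² = 0`.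

The exponents of `ξ_A^* f` are the `Aᵀ I`, with last coordinate `⟨I, A e_n⟩`; a Smith normal form
of `ℤ v` in `ℤⁿ` yields a unimodular `A` whose last column is orthogonal to `supp f`.
-/

open Matrix

section WeightedGram

variable {R α ι : Type*} [CommRing R] [Fintype ι]

theorem Matrix.det_sum_smul_vecMulVec [DecidableEq ι] (T : Finset α) (c : α → R)
    (v : α → ι → R) :
    (∑ t ∈ T, c t • vecMulVec (v t) (v t)).det =
      ∑ g ∈ Fintype.piFinset fun _ : ι => T,
        (∏ i, c (g i) * v (g i) i) * (Matrix.of fun i => v (g i)).det := by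
  have hrows : ∑ t ∈ T, c t • vecMulVec (v t) (v t) =
      Matrix.of fun i => ∑ t ∈ T, (c t * v t i) • v t := by
    ext i j
    simp [Matrix.sum_apply, vecMulVec_apply, mul_assoc]
  calc _ = detRowAlternating fun i => ∑ t ∈ T, (c t * v t i) • v t := by rw [hrows]; rfl
    _ = _ := by
      rw [← AlternatingMap.coe_multilinearMap, MultilinearMap.map_sum_finset]
      exact Finset.sum_congr rfl fun g _ => MultilinearMap.map_smul_univ _ _ _

theorem Matrix.sum_smul_vecMulVec_mulVec (T : Finset α) (c : α → R) (v : α → ι → R)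
    (u : ι → R) :
    (∑ t ∈ T, c t • vecMulVec (v t) (v t)) *ᵥ u = ∑ t ∈ T, (c t * (v t ⬝ᵥ u)) • v t := by
  simp only [Matrix.sum_mulVec, Matrix.smul_mulVec, vecMulVec_mulVec, op_smul_eq_smul, smul_smul]

end WeightedGram

theorem exists_ne_zero_forall_dotProduct_eq_zero_of_det_eq_zero {ι : Type*} [Fintype ι]
    [DecidableEq ι] (T : Finset (ι → ℤ))
    (hT : ∀ g ∈ Fintype.piFinset fun _ : ι => T, (Matrix.of g).det = 0) :
    ∃ v ≠ 0, ∀ t ∈ T, t ⬝ᵥ v = 0 := by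
  have hdet : (∑ t ∈ T, (1 : ℤ) • vecMulVec t t).det = 0 := by
    rw [det_sum_smul_vecMulVec]
    exact Finset.sum_eq_zero fun g hg => by simp [hT g hg]
  obtain ⟨v, hv, hker⟩ := exists_mulVec_eq_zero_iff.mpr hdet
  refine ⟨v, hv, ?_⟩
  have hsq : ∑ t ∈ T, (t ⬝ᵥ v) ^ 2 = 0 := by
    have := congrArg (v ⬝ᵥ ·) hker
    simp only [sum_smul_vecMulVec_mulVec, dotProduct_sum, dotProduct_smul, dotProduct_zero,
      one_mul, smul_eq_mul] at this
    simpa [dotProduct_comm v, sq] using this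
  intro t ht
  exact pow_eq_zero_iff two_ne_zero |>.mp <|
    (Finset.sum_eq_zero_iff_of_nonneg fun t _ => sq_nonneg _).mp hsq t ht

theorem injective_of_det_ne_zero {ι R : Type*} [Fintype ι] [DecidableEq ι] [CommRing R]
    {g : ι → ι → R} (hg : (Matrix.of g).det ≠ 0) : Function.Injective g :=
  fun _ _ hab => by_contra fun hne => hg (det_zero_of_row_eq hne hab)

section LexMaxBasis

variable {n : ℕ}

theorem exists_update_det_ne_zero {g h : Fin n → Fin n → ℤ} (hg : (Matrix.of g).det ≠ 0)
    (hh : (Matrix.of h).det ≠ 0) {i₀ : Fin n} (hi₀ : g i₀ ∉ Set.range h) :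
    ∃ j, h j ∉ Set.range g ∧ (Matrix.of (Function.update h j (g i₀))).det ≠ 0 := by
  set G : Matrix (Fin n) (Fin n) ℚ := (Matrix.of g).map (↑)
  set H : Matrix (Fin n) (Fin n) ℚ := (Matrix.of h).map (↑)
  have hG : G.det ≠ 0 := by rw [← Int.cast_det]; exact_mod_cast hg
  have hH : IsUnit H.det := isUnit_iff_ne_zero.mpr (by rw [← Int.cast_det]; exact_mod_cast hh)
  set c := G i₀ ᵥ* H⁻¹
  have hc : G i₀ = ∑ k, c k • H k := by
    rw [← vecMul_eq_sum, vecMul_vecMul, nonsing_inv_mul _ hH, vecMul_one]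
  have hdet_update (k : Fin n) :
      ((Matrix.of (Function.update h k (g i₀))).det : ℚ) = c k * H.det := by
    rw [Int.cast_det, show Matrix.of (Function.update h k (g i₀)) =
      (Matrix.of h).updateRow k (g i₀) from rfl, map_updateRow]
    exact (congrArg (fun r => (H.updateRow k r).det) hc).trans (det_updateRow_sum _ _ _)
  by_contra! hall
  have hsupp (k : Fin n) (hk : c k ≠ 0) : ∃ i ≠ i₀, H k = G i := by
    by_contra! hk'
    have hnot : h k ∉ Set.range g := by
      rintro ⟨i, hi⟩
      exact hk' i (by rintro rfl; exact hi₀ ⟨k, hi.symm⟩) (by ext j; simp [G, H, hi])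
    have : c k * H.det = 0 := by rw [← hdet_update, hall k hnot, Int.cast_zero]
    exact hk ((mul_eq_zero.mp this).resolve_right hH.ne_zero)
  have hmem : G i₀ ∈ Submodule.span ℚ (G '' {i₀}ᶜ) := by
    rw [hc]
    refine Submodule.sum_mem _ fun k _ => ?_
    by_cases hk : c k = 0
    · simp [hk]
    · obtain ⟨i, hi, hHG⟩ := hsupp k hk
      exact Submodule.smul_mem _ _ (Submodule.subset_span ⟨i, hi, hHG.symm⟩)
  have hli : LinearIndependent ℚ G.row :=
    linearIndependent_rows_iff_isUnit.mpr ((isUnit_iff_isUnit_det G).mpr hG.isUnit)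
  exact hli.notMem_span_image (s := {i₀}ᶜ) (by simp) hmem

theorem exists_lex_sum_lt {g h : Fin n → Fin n → ℤ} (hg : (Matrix.of g).det ≠ 0)
    (hh : (Matrix.of h).det ≠ 0) {i₀ : Fin n} (hi₀ : g i₀ ∉ Set.range h)
    (hmax : ∀ x ∈ symmDiff (Set.range g) (Set.range h), toLex x ≤ toLex (g i₀)) :
    ∃ h' : Fin n → Fin n → ℤ, (∀ i, h' i ∈ Set.range g ∪ Set.range h) ∧
      (Matrix.of h').det ≠ 0 ∧ toLex (∑ i, h i) < toLex (∑ i, h' i) := by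
  obtain ⟨j, hj, hdet⟩ := exists_update_det_ne_zero hg hh hi₀
  refine ⟨Function.update h j (g i₀), fun i => ?_, hdet, ?_⟩
  · rcases eq_or_ne i j with rfl | hij
    · simp
    · simp [Function.update_of_ne hij]
  have hlt : toLex (h j) < toLex (g i₀) :=
    lt_of_le_of_ne (hmax _ (Set.mem_symmDiff.mpr (.inr ⟨⟨j, rfl⟩, hj⟩)))
      fun heq => hi₀ ⟨j, toLex.injective heq⟩
  rw [Finset.sum_update_of_mem (Finset.mem_univ j),
    Finset.sum_eq_add_sum_sdiff_singleton_of_mem (Finset.mem_univ j), toLex_add, toLex_add]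
  exact add_lt_add_left hlt _

/-- Uniqueness of the lexicographically heaviest basis: exchanging the lex-largest element of the
symmetric difference into the tuple lacking it would make that tuple heavier. -/
theorem range_eq_of_lex_sum_max {T : Set (Fin n → ℤ)} {g h : Fin n → Fin n → ℤ}
    (hgT : ∀ i, g i ∈ T) (hhT : ∀ i, h i ∈ T) (hg : (Matrix.of g).det ≠ 0)
    (hh : (Matrix.of h).det ≠ 0)
    (hmax : ∀ g' : Fin n → Fin n → ℤ, (∀ i, g' i ∈ T) → (Matrix.of g').det ≠ 0 →
      toLex (∑ i, g' i) ≤ toLex (∑ i, g i))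
    (hsum : ∑ i, h i = ∑ i, g i) :
    Set.range h = Set.range g := by
  by_contra hne
  have hfin : (symmDiff (Set.range g) (Set.range h)).Finite :=
    ((Set.finite_range g).union (Set.finite_range h)).subset Set.symmDiff_subset_union
  have hne' : (symmDiff (Set.range g) (Set.range h)).Nonempty :=
    Set.nonempty_iff_ne_empty.mpr fun h0 => hne (symmDiff_eq_bot.mp h0).symm
  obtain ⟨e, he, hemax⟩ := Set.exists_max_image _ toLex hfin hne'
  have hT {h' : Fin n → Fin n → ℤ} (hh' : ∀ i, h' i ∈ Set.range g ∪ Set.range h) (i : Fin n) :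
      h' i ∈ T := by
    rcases hh' i with ⟨k, hk⟩ | ⟨k, hk⟩ <;> rw [← hk]
    exacts [hgT k, hhT k]
  rcases Set.mem_symmDiff.mp he with ⟨⟨i₀, rfl⟩, hi₀⟩ | ⟨⟨i₀, rfl⟩, hi₀⟩
  · obtain ⟨h', hh'R, hh'det, hlt⟩ := exists_lex_sum_lt hg hh hi₀ hemax
    exact (hmax h' (hT hh'R) hh'det).not_gt (hsum ▸ hlt)
  · rw [symmDiff_comm] at hemax
    obtain ⟨g', hg'R, hg'det, hlt⟩ := exists_lex_sum_lt hh hg hi₀ hemax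
    exact (hmax g' (hT fun i => (hg'R i).symm) hg'det).not_gt hlt

theorem exists_perm_eq_comp_of_range_eq {ι α : Type*} {g h : ι → α}
    (hg : Function.Injective g) (hh : Function.Injective h) (hrange : Set.range h = Set.range g) :
    ∃ σ : Equiv.Perm ι, h = g ∘ σ :=
  ⟨(Equiv.ofInjective h hh).trans ((Equiv.setCongr hrange).trans (Equiv.ofInjective g hg).symm),
    funext fun i => by simp [Equiv.apply_ofInjective_symm]⟩

end LexMaxBasis

theorem Submodule.exists_basis_smul_mem {ι R M : Type*} [CommRing R] [IsDomain R]
    [IsPrincipalIdealRing R] [AddCommGroup M] [Module R M] [Finite ι] (b : Module.Basis ι R M)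
    {N : Submodule R M} (hN : N ≠ ⊥) :
    ∃ (b' : Module.Basis ι R M) (j : ι) (a : R), a ≠ 0 ∧ a • b' j ∈ N := by
  obtain ⟨m, snf⟩ := N.smithNormalForm b
  have : Nontrivial N := Submodule.nontrivial_iff_ne_bot.mpr hN
  obtain ⟨i⟩ := snf.bN.index_nonempty
  refine ⟨snf.bM, snf.f i, snf.a i, fun ha => snf.bN.ne_zero i ?_, snf.snf i ▸ (snf.bN i).2⟩
  exact Subtype.ext (by rw [snf.snf i, ha, zero_smul, ZeroMemClass.coe_zero])

theorem exists_isUnit_det_forall_dotProduct_transpose_eq_zero {ι : Type*} [Fintype ι]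
    [DecidableEq ι] {T : Set (ι → ℤ)} {v : ι → ℤ} (hv : v ≠ 0) (hT : ∀ t ∈ T, t ⬝ᵥ v = 0)
    (j : ι) : ∃ A : Matrix ι ι ℤ, IsUnit A.det ∧ ∀ t ∈ T, t ⬝ᵥ Aᵀ j = 0 := by
  obtain ⟨b, k, a, ha, hmem⟩ := Submodule.exists_basis_smul_mem (Pi.basisFun ℤ ι)
    (N := ℤ ∙ v) (by simpa using hv)
  obtain ⟨r, hr⟩ := Submodule.mem_span_singleton.mp hmem
  set b' := b.reindex (Equiv.swap j k)
  refine ⟨(Pi.basisFun ℤ ι).toMatrix b', ?_, fun t ht => ?_⟩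
  · rw [← Module.Basis.det_apply]
    exact (Pi.basisFun ℤ ι).isUnit_det b'
  have hcol : ((Pi.basisFun ℤ ι).toMatrix b')ᵀ j = b k := by
    ext i; simp [b', Module.Basis.toMatrix_apply]
  have : a * (t ⬝ᵥ b k) = r * (t ⬝ᵥ v) := by
    rw [← smul_eq_mul, ← smul_eq_mul, ← dotProduct_smul, ← dotProduct_smul, hr]
  rw [hcol]
  simpa [hT t ht, ha] using this

section LogHessian

variable {n : ℕ}

theorem coeff_thetaDeriv (j : Fin n) (f : LaurentPoly n) (K : Fin n → ℤ) :
    (thetaDeriv j f).coeff K = f.coeff K * K j := by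
  classical
  simp only [thetaDeriv, AddMonoidAlgebra.coeff_ofCoeff, Finsupp.sum_apply, Finsupp.single_apply]
  rw [Finsupp.sum, Finset.sum_ite_eq']
  split_ifs with hK
  · rfl
  · rw [Finsupp.notMem_support_iff.mp hK, zero_mul]

theorem logHessian_eq_sum (f : LaurentPoly n) :
    logHessian f = ∑ t ∈ f.coeff.support,
      AddMonoidAlgebra.single t (f.coeff t) • vecMulVec (Int.cast ∘ t) (Int.cast ∘ t) := by
  classical
  ext i j K
  rw [Matrix.sum_apply]
  simp only [Matrix.smul_apply, vecMulVec_apply, Function.comp_apply,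
    AddMonoidAlgebra.intCast_def, smul_eq_mul, AddMonoidAlgebra.single_mul_single, add_zero,
    AddMonoidAlgebra.coeff_sum]
  simp only [Finset.sum_apply', AddMonoidAlgebra.coeff_single, Finsupp.single_apply]
  rw [Finset.sum_ite_eq', logHessian, of_apply, coeff_thetaDeriv, coeff_thetaDeriv]
  split_ifs with hK
  · ring
  · simp [Finsupp.notMem_support_iff.mp hK]

theorem det_logHessian (f : LaurentPoly n) :
    (logHessian f).det = ∑ g ∈ Fintype.piFinset fun _ => f.coeff.support,
      AddMonoidAlgebra.single (∑ i, g i) ((∏ i, f.coeff (g i) * g i i) * (Matrix.of g).det) := by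
  rw [logHessian_eq_sum, det_sum_smul_vecMulVec]
  refine Finset.sum_congr rfl fun g _ => ?_
  rw [show (Matrix.of fun i => (Int.cast ∘ g i : Fin n → LaurentPoly n)) = (Matrix.of g).map (↑)
    from rfl, ← Int.cast_det]
  simp only [Function.comp_apply, AddMonoidAlgebra.intCast_def, AddMonoidAlgebra.single_mul_single,
    add_zero, AddMonoidAlgebra.prod_single]

theorem coeff_det_logHessian (f : LaurentPoly n) (J : Fin n → ℤ) :
    (logHessian f).det.coeff J = ∑ g ∈ Fintype.piFinset (fun _ => f.coeff.support) with
      ∑ i, g i = J, (∏ i, f.coeff (g i) * g i i) * (Matrix.of g).det := by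
  classical
  rw [det_logHessian, AddMonoidAlgebra.coeff_sum, Finset.sum_apply', Finset.sum_filter]
  simp only [AddMonoidAlgebra.coeff_single, Finsupp.single_apply]

theorem coeff_det_logHessian_of_lex_max {f : LaurentPoly n} {g : Fin n → Fin n → ℤ}
    (hgT : ∀ i, g i ∈ f.coeff.support) (hg : (Matrix.of g).det ≠ 0)
    (hmax : ∀ g' : Fin n → Fin n → ℤ, (∀ i, g' i ∈ f.coeff.support) → (Matrix.of g').det ≠ 0 →
      toLex (∑ i, g' i) ≤ toLex (∑ i, g i)) :
    (logHessian f).det.coeff (∑ i, g i) = (∏ i, f.coeff (g i)) * (Matrix.of g).det ^ 2 := by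
  classical
  have hdet_comp (σ : Equiv.Perm (Fin n)) :
      (Matrix.of (g ∘ σ)).det = Equiv.Perm.sign σ * (Matrix.of g).det :=
    det_permute σ (Matrix.of g)
  have hsupport : {g' ∈ Fintype.piFinset (fun _ : Fin n => f.coeff.support) |
      ∑ i, g' i = ∑ i, g i ∧ (Matrix.of g').det ≠ 0} =
        Finset.univ.image fun σ : Equiv.Perm (Fin n) => g ∘ σ := by
    ext g'
    simp only [Finset.mem_filter, Fintype.mem_piFinset, Finset.mem_image, Finset.mem_univ,
      true_and]
    constructor
    · rintro ⟨hg'T, hsum, hg'⟩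
      obtain ⟨σ, hσ⟩ := exists_perm_eq_comp_of_range_eq (injective_of_det_ne_zero hg)
        (injective_of_det_ne_zero hg') (range_eq_of_lex_sum_max hgT hg'T hg hg' hmax hsum)
      exact ⟨σ, hσ.symm⟩
    · rintro ⟨σ, rfl⟩
      refine ⟨fun i => hgT (σ i), Equiv.sum_comp σ g, ?_⟩
      rw [hdet_comp]
      exact mul_ne_zero (Units.ne_zero _) hg
  have hinj : Function.Injective fun σ : Equiv.Perm (Fin n) => g ∘ σ :=
    fun σ τ h => Equiv.ext fun i => injective_of_det_ne_zero hg (congrFun h i)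
  rw [coeff_det_logHessian, ← Finset.sum_filter_of_ne (p := fun g' => (Matrix.of g').det ≠ 0)
    fun g' _ h hdet => h (by simp [hdet]), Finset.filter_filter, hsupport,
    Finset.sum_image hinj.injOn]
  calc ∑ σ : Equiv.Perm (Fin n),
        (∏ i, f.coeff (g (σ i)) * g (σ i) i) * ((Matrix.of (g ∘ σ)).det : ℂ)
      = ∑ σ : Equiv.Perm (Fin n), (∏ i, f.coeff (g i)) * (Matrix.of g).det *
          (Equiv.Perm.sign σ * ∏ i, (g (σ i) i : ℂ)) := by
        refine Finset.sum_congr rfl fun σ _ => ?_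
        rw [hdet_comp, Finset.prod_mul_distrib, Equiv.prod_comp σ fun i => f.coeff (g i)]
        push_cast
        ring
    _ = (∏ i, f.coeff (g i)) * (Matrix.of g).det * ((Matrix.of g).map (↑)).det := by
        rw [← Finset.mul_sum, det_apply' ((Matrix.of g).map _)]
        rfl
    _ = (∏ i, f.coeff (g i)) * (Matrix.of g).det ^ 2 := by
        rw [← Int.cast_det]
        ring

theorem det_logHessian_ne_zero_of_det_ne_zero {f : LaurentPoly n} {g : Fin n → Fin n → ℤ}
    (hgT : ∀ i, g i ∈ f.coeff.support) (hg : (Matrix.of g).det ≠ 0) :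
    (logHessian f).det ≠ 0 := by
  classical
  obtain ⟨gm, hgm, hmax⟩ := Finset.exists_max_image
    {g' ∈ Fintype.piFinset (fun _ => f.coeff.support) | (Matrix.of g').det ≠ 0}
    (fun g' => toLex (∑ i, g' i)) ⟨g, by simp [hgT, hg]⟩
  simp only [Finset.mem_filter, Fintype.mem_piFinset] at hgm hmax
  intro h0
  have hcoeff := coeff_det_logHessian_of_lex_max hgm.1 hgm.2 fun g' h1 h2 => hmax g' ⟨h1, h2⟩
  rw [h0, AddMonoidAlgebra.coeff_zero, Finsupp.coe_zero, Pi.zero_apply, eq_comm] at hcoeff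
  refine mul_ne_zero (Finset.prod_ne_zero_iff.mpr fun i _ => ?_) (pow_ne_zero 2 ?_) hcoeff
  · exact Finsupp.mem_support_iff.mp (hgm.1 i)
  · exact_mod_cast hgm.2

theorem det_logHessian_eq_zero_iff (f : LaurentPoly n) :
    (logHessian f).det = 0 ↔ ∃ v : Fin n → ℤ, v ≠ 0 ∧ ∀ t ∈ f.coeff.support, t ⬝ᵥ v = 0 := by
  constructor
  · intro h
    refine exists_ne_zero_forall_dotProduct_eq_zero_of_det_eq_zero _ fun g hg => ?_
    by_contra hdet
    exact det_logHessian_ne_zero_of_det_ne_zero (Fintype.mem_piFinset.mp hg) hdet h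
  · rintro ⟨v, hv, horth⟩
    refine exists_mulVec_eq_zero_iff.mp ⟨Int.cast ∘ v, fun h0 => hv ?_, ?_⟩
    · ext j
      simpa [AddMonoidAlgebra.intCast_def] using congrFun h0 j
    · rw [logHessian_eq_sum, sum_smul_vecMulVec_mulVec]
      refine Finset.sum_eq_zero fun t ht => ?_
      have hcast :
          (Int.cast ∘ t ⬝ᵥ Int.cast ∘ v : LaurentPoly n) = ((t ⬝ᵥ v : ℤ) : LaurentPoly n) :=
        ((Int.castRingHom _).map_dotProduct t v).symm
      rw [hcast, horth t ht, Int.cast_zero, mul_zero, zero_smul]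

theorem forall_support_monoidalPullback_iff {A : Matrix (Fin n) (Fin n) ℤ} (hA : A.det ≠ 0)
    (f : LaurentPoly n) (j : Fin n) :
    (∀ I ∈ (monoidalPullback A f).coeff.support, I j = 0) ↔
      ∀ t ∈ f.coeff.support, t ⬝ᵥ Aᵀ j = 0 := by
  classical
  have hinj : Function.Injective (Aᵀ *ᵥ ·) :=
    mulVec_injective_of_det_ne_zero (by rwa [det_transpose])
  rw [monoidalPullback, AddMonoidAlgebra.coeff_ofCoeff,
    Finsupp.mapDomain_support_of_injective hinj, Finset.forall_mem_image]
  simp only [mulVec_transpose]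
  rfl

end LogHessian

/-- **Logarithmic Hesse problem, iff form.**
A Laurent polynomial `f ∈ S_n` (`n ≥ 1`) has vanishing logarithmic Hessian if and only
if there is `A ∈ M(n,ℤ)` with `det A = ±1` such that `ξ_A^* f` depends on at most `n−1`
variables, i.e. every exponent `I` in the support of `ξ_A^* f` has last coordinate
`I_n = 0`. -/
theorem logarithmic_hesse_iff (n : ℕ) (hn : 1 ≤ n) (f : LaurentPoly n) :
    (logHessian f).det = 0 ↔
      ∃ A : Matrix (Fin n) (Fin n) ℤ, (A.det = 1 ∨ A.det = -1) ∧
        ∀ I ∈ (monoidalPullback A f).coeff.support, I ⟨n - 1, by omega⟩ = 0 := by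
  rw [det_logHessian_eq_zero_iff]
  constructor
  · rintro ⟨v, hv, horth⟩
    obtain ⟨A, hA, hcol⟩ :=
      exists_isUnit_det_forall_dotProduct_transpose_eq_zero hv horth ⟨n - 1, by omega⟩
    exact ⟨A, Int.isUnit_iff.mp hA, (forall_support_monoidalPullback_iff hA.ne_zero f _).mpr hcol⟩
  · rintro ⟨A, hA, hsupp⟩
    have hA₀ : A.det ≠ 0 := by rcases hA with h | h <;> simp [h]
    refine ⟨Aᵀ ⟨n - 1, by omega⟩, fun hcol => hA₀ ?_,
      (forall_support_monoidalPullback_iff hA₀ f _).mp hsupp⟩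
    rw [← det_transpose]
    exact det_eq_zero_of_row_eq_zero _ fun i => congrFun hcol i
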